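/- arXiv:2109.12744 — 2 statements merged into one kernel-verified Lean document; each statement's English description precedes it below -/
import Mathlib

section
/- For every positive integer m there exists a constant C (depending on m) such that for all real x ≥ 1, |∑_{1 ≤ Δ ≤ x} Δ · K_m(Δ) · log(x/Δ) − (c_m(2)/ζ(2)) · x²/4| ≤ C·x, where c_m(2) = ∏_{p | m} (1 - 1/p²)^{-1}. -/
open Finset Real

/-- `K m n = ∑_{d ∣ n, gcd(d,m)=1} μ(d)/d` as a rational number. -/
def K (m n : ℕ) : ℚ :=
  ∑ d ∈ n.divisors.filter (fun d => Nat.gcd d m = 1),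
    (ArithmeticFunction.moebius d : ℚ) / d

namespace PerronAux

noncomputable def A (k : ℕ) : ℝ := k * (k + 1) / 2

lemma abs_moebius_le_one (d : ℕ) : |(ArithmeticFunction.moebius d : ℝ)| ≤ 1 := by
  by_cases h : Squarefree d
  · rw [ArithmeticFunction.moebius_apply_of_squarefree h]
    push_cast
    rw [abs_pow, abs_neg, abs_one, one_pow]
  · rw [ArithmeticFunction.moebius_eq_zero_of_not_squarefree h]
    norm_num

lemma sum_log_id (y : ℝ) (hy : 0 < y) (n : ℕ) :
    ∑ e ∈ Finset.range (n+1), (e : ℝ) * Real.log (y / e)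
      = ∑ k ∈ Finset.range n, A k * Real.log ((k+1 : ℝ) / k) + A n * Real.log (y / n) := by
  induction n with
  | zero => simp [A]
  | succ n ih =>
    rw [Finset.sum_range_succ, ih, Finset.sum_range_succ]
    rcases Nat.eq_zero_or_pos n with rfl | hn
    · simp [A]
    · have hn' : (0:ℝ) < n := by exact_mod_cast hn
      have hn1 : (0:ℝ) < (n:ℝ)+1 := by positivity
      have e1 : Real.log ((n+1:ℝ)/n) = Real.log ((n:ℝ)+1) - Real.log n :=
        Real.log_div (by positivity) (ne_of_gt hn')
      have e2 : Real.log (y/n) = Real.log y - Real.log n :=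
        Real.log_div (ne_of_gt hy) (ne_of_gt hn')
      have e3 : Real.log (y/((n:ℝ)+1)) = Real.log y - Real.log ((n:ℝ)+1) :=
        Real.log_div (ne_of_gt hy) (ne_of_gt hn1)
      have hA : A (n+1) = A n + (n+1) := by simp [A]; ring
      push_cast
      rw [e1, e2, e3, hA]
      ring

lemma sqrt_harmonic (M : ℕ) : ∑ k ∈ Finset.Icc 1 M, (1 : ℝ) / Real.sqrt k ≤ 2 * Real.sqrt M := by
  induction M with
  | zero => simp
  | succ M ih =>
    rw [Finset.sum_Icc_succ_top (by omega)]
    have ha : (0:ℝ) ≤ (M:ℝ) := by positivity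
    set a := Real.sqrt M with hadef
    set b := Real.sqrt ((M:ℝ)+1) with hbdef
    have hb : 0 < b := Real.sqrt_pos.mpr (by positivity)
    have ha0 : 0 ≤ a := Real.sqrt_nonneg _
    have ha2 : a^2 = M := Real.sq_sqrt ha
    have hb2 : b^2 = (M:ℝ)+1 := Real.sq_sqrt (by positivity)
    have key : 2*a + 1/b ≤ 2*b := by
      have h1 : 1/b ≤ b - a*2 + b := by
        rw [div_le_iff₀ hb]
        nlinarith [sq_nonneg (a-b)]
      linarith
    have : ((M+1:ℕ):ℝ) = (M:ℝ)+1 := by push_cast; ring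
    rw [this]
    linarith [ih]

lemma per_term {k : ℕ} (hk : 1 ≤ k) :
    |A k * Real.log ((k+1 : ℝ) / k) - (((k:ℝ)+1)/2 - 1/4)| ≤ 3 / k := by
  have hc : (1:ℝ) ≤ (k:ℝ) := by exact_mod_cast hk
  have hc0 : (0:ℝ) < k := by linarith
  have hlogform : ((k:ℝ)+1)/k = 1 + 1/k := by field_simp
  rcases eq_or_lt_of_le hk with h1 | h2
  · -- k = 1
    have hk1 : k = 1 := h1.symm
    subst hk1
    have hl0 : (0:ℝ) ≤ Real.log 2 := Real.log_nonneg (by norm_num)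
    have hl1 : Real.log 2 ≤ 1 := by
      have := Real.log_le_sub_one_of_pos (x := 2) (by norm_num)
      linarith
    have hgoal : ((1:ℕ):ℝ) = 1 := by norm_num
    simp only [A, hgoal]
    norm_num
    rw [abs_le]
    constructor <;> linarith
  · -- k ≥ 2
    have hk2 : (2:ℕ) ≤ k := h2
    have hc2 : (2:ℝ) ≤ (k:ℝ) := by exact_mod_cast hk2
    have hx : |(-(1/(k:ℝ)))| < 1 := by
      rw [abs_neg, abs_of_pos (by positivity)]
      rw [div_lt_one hc0]; linarith
    have key := Real.abs_log_sub_add_sum_range_le hx 2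
    have hsum : ∑ i ∈ Finset.range 2, (-(1/(k:ℝ)))^(i+1)/(i+1)
        = -(1/(k:ℝ)) + 1/(2*(k:ℝ)^2) := by
      simp [Finset.sum_range_succ]
      ring
    rw [hsum] at key
    have h1mx : (1:ℝ) - -(1/(k:ℝ)) = 1 + 1/k := by ring
    rw [h1mx, ← hlogform] at key
    have habs : |(-(1/(k:ℝ)))|^(2+1) / (1 - |(-(1/(k:ℝ)))|) ≤ 2/(k:ℝ)^3 := by
      rw [abs_neg, abs_of_pos (by positivity)]
      rw [div_le_iff₀ (by rw [sub_pos, div_lt_one hc0]; linarith)]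
      have : (1/(k:ℝ))^(2+1) = 1/(k:ℝ)^3 := by ring
      rw [this]
      rw [div_mul_eq_mul_div, div_le_div_iff₀ (by positivity) (by positivity)]
      have h12 : 1/(k:ℝ) ≤ 1/2 := by
        rw [div_le_div_iff₀ hc0 (by norm_num)]; linarith
      nlinarith [pow_pos hc0 3]
    have key2 : |Real.log (((k:ℝ)+1)/k) - 1/(k:ℝ) + 1/(2*(k:ℝ)^2)| ≤ 2/(k:ℝ)^3 := by
      calc |Real.log (((k:ℝ)+1)/k) - 1/(k:ℝ) + 1/(2*(k:ℝ)^2)|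
          = |(-(1/(k:ℝ)) + 1/(2*(k:ℝ)^2)) + Real.log (((k:ℝ)+1)/k)| := by ring_nf
        _ ≤ _ := le_trans key habs
    -- multiply by A k
    have hA : A k = (k:ℝ)*((k:ℝ)+1)/2 := rfl
    have hAnn : 0 ≤ A k := by rw [hA]; positivity
    have step1 : |A k * Real.log (((k:ℝ)+1)/k) - A k * (1/(k:ℝ) - 1/(2*(k:ℝ)^2))|
        ≤ A k * (2/(k:ℝ)^3) := by
      rw [← mul_sub, abs_mul, abs_of_nonneg hAnn]
      apply mul_le_mul_of_nonneg_left _ hAnn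
      calc |Real.log (((k:ℝ)+1)/k) - (1/(k:ℝ) - 1/(2*(k:ℝ)^2))|
          = |Real.log (((k:ℝ)+1)/k) - 1/(k:ℝ) + 1/(2*(k:ℝ)^2)| := by ring_nf
        _ ≤ 2/(k:ℝ)^3 := key2
    have e1 : A k * (1/(k:ℝ) - 1/(2*(k:ℝ)^2)) = ((k:ℝ)+1)/2 - ((k:ℝ)+1)/(4*k) := by
      rw [hA]; field_simp; ring
    have e2 : A k * (2/(k:ℝ)^3) = ((k:ℝ)+1)/(k:ℝ)^2 := by
      rw [hA]; field_simp
    rw [e1, e2] at step1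
    have e3 : |((k:ℝ)+1)/(4*k) - 1/4| ≤ 1/(4*k) := by
      have : ((k:ℝ)+1)/(4*k) - 1/4 = 1/(4*k) := by field_simp; ring
      rw [this, abs_of_pos (by positivity)]
    have e4 : ((k:ℝ)+1)/(k:ℝ)^2 ≤ 2/(k:ℝ) := by
      rw [div_le_div_iff₀ (by positivity) hc0]
      nlinarith
    calc |A k * Real.log (((k:ℝ)+1)/k) - (((k:ℝ)+1)/2 - 1/4)|
        ≤ |A k * Real.log (((k:ℝ)+1)/k) - (((k:ℝ)+1)/2 - ((k:ℝ)+1)/(4*k))|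
          + |((k:ℝ)+1)/(4*k) - 1/4| := by
          have heq : A k * Real.log (((k:ℝ)+1)/k) - (((k:ℝ)+1)/2 - 1/4)
              = (A k * Real.log (((k:ℝ)+1)/k) - (((k:ℝ)+1)/2 - ((k:ℝ)+1)/(4*k)))
                - (((k:ℝ)+1)/(4*k) - 1/4) := by ring
          rw [heq]; exact abs_sub _ _
      _ ≤ 2/(k:ℝ) + 1/(4*k) := add_le_add (step1.trans e4) e3
      _ ≤ 3/(k:ℝ) := by
          rw [div_add_div _ _ (by positivity) (by positivity)]
          rw [div_le_div_iff₀ (by positivity) hc0]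
          ring_nf
          nlinarith

noncomputable def T (y : ℝ) : ℝ := ∑ e ∈ Finset.Icc 1 ⌊y⌋₊, (e : ℝ) * Real.log (y / e)

lemma log_lb {u : ℝ} (hu : 0 ≤ u) : u - u^2 ≤ Real.log (1+u) := by
  have h1u : (0:ℝ) < 1 + u := by linarith
  have h := Real.log_le_sub_one_of_pos (x := 1/(1+u)) (by positivity)
  rw [one_div, Real.log_inv] at h
  have h2 : Real.log (1+u) ≥ 1 - (1+u)⁻¹ := by linarith
  have h3 : 1 - (1+u)⁻¹ = u/(1+u) := by field_simp; ring
  have h4 : u - u^2 ≤ u/(1+u) := by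
    rw [le_div_iff₀ h1u]; nlinarith
  linarith [h3 ▸ h2]

lemma gauss_real (M : ℕ) : ∑ k ∈ Finset.Icc 1 M, (k:ℝ) = M*(M+1)/2 := by
  induction M with
  | zero => simp
  | succ M ih => rw [Finset.sum_Icc_succ_top (by omega), ih]; push_cast; ring

set_option maxHeartbeats 1000000 in
lemma T_estimate {y : ℝ} (hy : 1 ≤ y) : |T y - y^2/4| ≤ 8 * Real.sqrt y := by
  have hy0 : (0:ℝ) < y := by linarith
  set n := ⌊y⌋₊ with hndef
  have hn1 : 1 ≤ n := Nat.le_floor (by exact_mod_cast hy)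
  have hny : (n:ℝ) ≤ y := Nat.floor_le (by linarith)
  have hyn : y < n + 1 := Nat.lt_floor_add_one y
  have hn0 : (0:ℝ) < n := by exact_mod_cast hn1
  -- step 1 : identity
  have hTeq : T y = ∑ k ∈ Finset.range n, A k * Real.log ((k+1 : ℝ) / k)
      + A n * Real.log (y / n) := by
    rw [T, ← sum_log_id y hy0 n]
    apply Finset.sum_subset
    · intro k hk
      simp only [Finset.mem_Icc] at hk
      simp only [Finset.mem_range]; omega
    · intro k hk hk2
      simp only [Finset.mem_range] at hk
      simp only [Finset.mem_Icc] at hk2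
      have : k = 0 := by omega
      subst this; simp
  -- step 2
  have hrange : ∑ k ∈ Finset.range n, A k * Real.log ((k+1 : ℝ) / k)
      = ∑ k ∈ Finset.Icc 1 (n-1), A k * Real.log ((k+1 : ℝ) / k) := by
    symm
    apply Finset.sum_subset
    · intro k hk; simp only [Finset.mem_Icc] at hk; simp only [Finset.mem_range]; omega
    · intro k hk hk2
      simp only [Finset.mem_range] at hk
      simp only [Finset.mem_Icc] at hk2
      have : k = 0 := by omega
      subst this; simp [A]
  have hM : ((n-1:ℕ):ℝ) = (n:ℝ) - 1 := by
    push_cast [Nat.cast_sub hn1]; ring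
  have hb : ∑ k ∈ Finset.Icc 1 (n-1), (((k:ℝ)+1)/2 - 1/4) = ((n:ℝ)^2-1)/4 := by
    have h1 : ∀ k:ℕ, ((k:ℝ)+1)/2 - 1/4 = (k:ℝ)/2 + 1/4 := fun k => by ring
    simp_rw [h1]
    rw [Finset.sum_add_distrib, ← Finset.sum_div, gauss_real, Finset.sum_const, Nat.card_Icc]
    have hcard : (n - 1 + 1 - 1) = n - 1 := by omega
    rw [hcard, nsmul_eq_mul, hM]
    ring
  have hstep2 : |∑ k ∈ Finset.range n, A k * Real.log ((k+1 : ℝ) / k) - ((n:ℝ)^2-1)/4|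
      ≤ 6 * Real.sqrt y := by
    rw [hrange, ← hb, ← Finset.sum_sub_distrib]
    calc |∑ k ∈ Finset.Icc 1 (n-1), (A k * Real.log ((k+1 : ℝ) / k) - (((k:ℝ)+1)/2 - 1/4))|
        ≤ ∑ k ∈ Finset.Icc 1 (n-1), |A k * Real.log ((k+1 : ℝ) / k) - (((k:ℝ)+1)/2 - 1/4)| :=
          Finset.abs_sum_le_sum_abs _ _
      _ ≤ ∑ k ∈ Finset.Icc 1 (n-1), 3 * (1/Real.sqrt k) := by
          apply Finset.sum_le_sum
          intro k hk
          simp only [Finset.mem_Icc] at hk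
          refine (per_term hk.1).trans ?_
          have hk0 : (0:ℝ) < k := by exact_mod_cast hk.1
          rw [div_eq_mul_one_div]
          apply mul_le_mul_of_nonneg_left _ (by norm_num : (0:ℝ) ≤ 3)
          have hk1 : (1:ℝ) ≤ k := by exact_mod_cast hk.1
          have hks : Real.sqrt k ≤ (k:ℝ) := by
            have h2 : Real.sqrt k ≤ Real.sqrt ((k:ℝ)^2) := Real.sqrt_le_sqrt (by nlinarith)
            rwa [Real.sqrt_sq (le_of_lt hk0)] at h2
          have hsp : (0:ℝ) < Real.sqrt k := Real.sqrt_pos.mpr hk0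
          rw [div_le_div_iff₀ hk0 hsp]
          nlinarith [hks, hsp]
      _ = 3 * ∑ k ∈ Finset.Icc 1 (n-1), (1/Real.sqrt k) := by rw [Finset.mul_sum]
      _ ≤ 3 * (2 * Real.sqrt (n-1:ℕ)) := by
          apply mul_le_mul_of_nonneg_left (sqrt_harmonic _) (by norm_num)
      _ ≤ 6 * Real.sqrt y := by
          have h1 : ((n-1:ℕ):ℝ) ≤ y := by
            have : ((n-1:ℕ):ℝ) ≤ (n:ℝ) := by exact_mod_cast Nat.sub_le n 1
            linarith
          have := Real.sqrt_le_sqrt h1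
          linarith
  -- step 3
  have hstep3 : |A n * Real.log (y/n) - n*(y-n)/2| ≤ 3/2 := by
    obtain ⟨u, hudef⟩ : ∃ u : ℝ, u = y/(n:ℝ) - 1 := ⟨_, rfl⟩
    have hu0 : 0 ≤ u := by
      rw [hudef, sub_nonneg, le_div_iff₀ hn0]; linarith
    have hun : u ≤ 1/n := by
      have h : y / (n:ℝ) ≤ ((n:ℝ)+1)/n := by gcongr <;> linarith
      have h2 : ((n:ℝ)+1)/n - 1 = 1/n := by field_simp; ring
      rw [hudef]; linarith
    have hyu : y/(n:ℝ) = 1 + u := by rw [hudef]; ring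
    have hlogle : Real.log (y/n) ≤ u := by
      rw [hyu]
      have := Real.log_le_sub_one_of_pos (x := 1+u) (by linarith)
      linarith
    have hlogge : u - u^2 ≤ Real.log (y/n) := by rw [hyu]; exact log_lb hu0
    have hAnn : (0:ℝ) ≤ A n := by simp only [A]; positivity
    have hAu : A n * u = (n:ℝ)*(y-n)/2 + (y-n)/2 := by
      simp only [A, hudef]; field_simp
    have hAu2 : A n * u^2 ≤ 1 := by
      have h1 : u^2 ≤ 1/(n:ℝ)^2 := by
        have h2 := mul_le_mul hun hun hu0 (by positivity)
        calc u^2 = u*u := sq u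
          _ ≤ (1/(n:ℝ))*(1/n) := h2
          _ = 1/(n:ℝ)^2 := by ring
      calc A n * u^2 ≤ A n * (1/(n:ℝ)^2) := mul_le_mul_of_nonneg_left h1 hAnn
        _ = ((n:ℝ)+1)/(2*n) := by simp only [A]; field_simp
        _ ≤ 1 := by
            have hn1r : (1:ℝ) ≤ n := by exact_mod_cast hn1
            rw [div_le_one (by positivity)]; linarith
    have hup : A n * Real.log (y/n) ≤ A n * u := mul_le_mul_of_nonneg_left hlogle hAnn
    have hdn : A n * u - A n * u^2 ≤ A n * Real.log (y/n) := by
      have := mul_le_mul_of_nonneg_left hlogge hAnn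
      calc A n * u - A n * u^2 = A n * (u - u^2) := by ring
        _ ≤ _ := this
    have hyn2 : y - n ≤ 1 := by linarith
    have hyn3 : 0 ≤ y - n := by linarith
    have hub : A n * Real.log (y/n) - (n:ℝ)*(y-n)/2 ≤ 3/2 := by nlinarith [hup, hAu, hyn2]
    have hdn2 : (n:ℝ)*(y-n)/2 + (y-n)/2 - A n * u^2 ≤ A n * Real.log (y/n) := by
      linarith [hdn, hAu]
    have hlb : -(3/2) ≤ A n * Real.log (y/n) - (n:ℝ)*(y-n)/2 := by
      linarith [hdn2, hAu2, hyn3]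
    rw [abs_le]; exact ⟨hlb, hub⟩
  -- step 4
  have halg : |((n:ℝ)^2-1)/4 + (n:ℝ)*(y-n)/2 - y^2/4| ≤ 1/2 := by
    have h1 : ((n:ℝ)^2-1)/4 + (n:ℝ)*(y-n)/2 - y^2/4 = -1/4 - (y-n)^2/4 := by ring
    rw [h1, abs_le]
    have : (y-n)^2 ≤ 1 := by nlinarith
    constructor <;> nlinarith
  have hsq1 : (1:ℝ) ≤ Real.sqrt y := by
    rw [show (1:ℝ) = Real.sqrt 1 by simp]
    exact Real.sqrt_le_sqrt hy
  have decomp : T y - y^2/4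
      = (∑ k ∈ Finset.range n, A k * Real.log ((k+1 : ℝ) / k) - ((n:ℝ)^2-1)/4)
        + (A n * Real.log (y/n) - (n:ℝ)*(y-n)/2)
        + (((n:ℝ)^2-1)/4 + (n:ℝ)*(y-n)/2 - y^2/4) := by
    rw [hTeq]; ring
  rw [decomp]
  refine (abs_add_three _ _ _).trans ?_
  have hsum := add_le_add (add_le_add hstep2 hstep3) halg
  have h2 : 6 * Real.sqrt y + 3/2 + 1/2 ≤ 8 * Real.sqrt y := by nlinarith [hsq1]
  linarith [hsum, h2]

lemma reindex (m : ℕ) (x : ℝ) (N : ℕ) :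
    ∑ Δ ∈ Finset.Icc 1 N, (Δ : ℝ) * (K m Δ : ℝ) * Real.log (x / Δ)
      = ∑ d ∈ (Finset.Icc 1 N).filter (fun d => Nat.gcd d m = 1),
          (ArithmeticFunction.moebius d : ℝ) *
            ∑ e ∈ Finset.Icc 1 (N / d), ((e:ℝ) * Real.log (x / (d * e))) := by
  have lhs_eq : ∀ Δ ∈ Finset.Icc 1 N, (Δ : ℝ) * (K m Δ : ℝ) * Real.log (x / Δ)
      = ∑ d ∈ Δ.divisors.filter (fun d => Nat.gcd d m = 1),
          (ArithmeticFunction.moebius d : ℝ) * (((Δ / d : ℕ)):ℝ) * Real.log (x / Δ) := by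
    intro Δ hΔ
    simp only [Finset.mem_Icc] at hΔ
    have hΔ0 : 0 < Δ := hΔ.1
    rw [K]
    push_cast
    rw [Finset.mul_sum, Finset.sum_mul]
    apply Finset.sum_congr rfl
    intro d hd
    simp only [Finset.mem_filter, Nat.mem_divisors] at hd
    have hdvd := hd.1.1
    have hd0' : 0 < d := Nat.pos_of_dvd_of_pos hdvd hΔ0
    have hd0 : (0:ℝ) < d := by exact_mod_cast hd0'
    rw [Nat.cast_div hdvd (ne_of_gt hd0)]
    ring
  rw [Finset.sum_congr rfl lhs_eq]
  have rhs_eq : ∀ d ∈ (Finset.Icc 1 N).filter (fun d => Nat.gcd d m = 1),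
      (ArithmeticFunction.moebius d : ℝ) *
          ∑ e ∈ Finset.Icc 1 (N / d), ((e:ℝ) * Real.log (x / (d * e)))
        = ∑ e ∈ Finset.Icc 1 (N / d),
            (ArithmeticFunction.moebius d : ℝ) * ((e:ℝ) * Real.log (x / (d * e))) := by
    intro d _
    rw [Finset.mul_sum]
  rw [Finset.sum_congr rfl rhs_eq]
  rw [Finset.sum_sigma', Finset.sum_sigma']
  apply Finset.sum_nbij' (i := fun p : Σ _ : ℕ, ℕ => (⟨p.2, p.1 / p.2⟩ : Σ _ : ℕ, ℕ))
    (j := fun p : Σ _ : ℕ, ℕ => (⟨p.1 * p.2, p.1⟩ : Σ _ : ℕ, ℕ))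
  · -- hi
    rintro ⟨Δ, d⟩ h
    simp only [Finset.mem_sigma, Finset.mem_Icc, Finset.mem_filter, Nat.mem_divisors] at h ⊢
    obtain ⟨⟨h1, hN⟩, ⟨hdvd, hΔ0⟩, hgcd⟩ := h
    have hd1 : 1 ≤ d := Nat.pos_of_dvd_of_pos hdvd h1
    refine ⟨⟨⟨hd1, le_trans (Nat.le_of_dvd h1 hdvd) hN⟩, hgcd⟩, ?_, ?_⟩
    · exact Nat.one_le_div_iff hd1 |>.mpr (Nat.le_of_dvd h1 hdvd)
    · exact Nat.div_le_div_right hN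
  · -- hj
    rintro ⟨d, e⟩ h
    simp only [Finset.mem_sigma, Finset.mem_Icc, Finset.mem_filter, Nat.mem_divisors] at h ⊢
    obtain ⟨⟨⟨hd1, hdN⟩, hgcd⟩, he1, heN⟩ := h
    have hde : d * e ≤ N := by
      have h := (Nat.le_div_iff_mul_le (by omega : 0 < d)).mp heN
      rwa [mul_comm] at h
    have hpos : 1 ≤ d * e := by
      calc 1 = 1*1 := rfl
        _ ≤ d * e := Nat.mul_le_mul hd1 he1
    refine ⟨⟨hpos, hde⟩, ⟨Dvd.intro_left e (by ring), by omega⟩, hgcd⟩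
  · -- left_inv
    rintro ⟨Δ, d⟩ h
    simp only [Finset.mem_sigma, Finset.mem_Icc, Finset.mem_filter, Nat.mem_divisors] at h
    obtain ⟨⟨h1, hN⟩, ⟨hdvd, hΔ0⟩, hgcd⟩ := h
    simp only [Sigma.mk.inj_iff]
    exact ⟨Nat.mul_div_cancel' hdvd, heq_of_eq rfl⟩
  · -- right_inv
    rintro ⟨d, e⟩ h
    simp only [Finset.mem_sigma, Finset.mem_Icc, Finset.mem_filter] at h
    obtain ⟨⟨⟨hd1, hdN⟩, hgcd⟩, he1, heN⟩ := h
    simp only [Sigma.mk.inj_iff]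
    exact ⟨trivial, heq_of_eq (Nat.mul_div_cancel_left e (by omega))⟩
  · -- values
    rintro ⟨Δ, d⟩ h
    simp only [Finset.mem_sigma, Finset.mem_Icc, Finset.mem_filter, Nat.mem_divisors] at h
    obtain ⟨⟨h1, hN⟩, ⟨hdvd, hΔ0⟩, hgcd⟩ := h
    have : d * (Δ / d) = Δ := Nat.mul_div_cancel' hdvd
    simp only []
    rw [← Nat.cast_mul, this]
    ring

noncomputable def hnu (m : ℕ) (e : ℕ) : ℝ := if Nat.gcd e m = 1 then 1/(e:ℝ)^2 else 0

lemma hasSum_sieve (S : Finset ℕ) : (∀ p ∈ S, p.Prime) →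
    HasSum (fun n : ℕ => if ∀ p ∈ S, ¬ p ∣ n then 1/(n:ℝ)^2 else 0)
      ((π^2/6) * ∏ p ∈ S, (1 - 1/(p:ℝ)^2)) := by
  classical
  induction S using Finset.induction_on with
  | empty => intro _; simpa using hasSum_zeta_two
  | @insert q S hqS ih =>
    intro hS
    have hq : q.Prime := hS q (Finset.mem_insert_self q S)
    have hS' : ∀ p ∈ S, p.Prime := fun p hp => hS p (Finset.mem_insert_of_mem hp)
    have IH := ih hS'
    set Z := (π^2/6) * ∏ p ∈ S, (1 - 1/(p:ℝ)^2) with hZ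
    set F := fun n : ℕ => if ∀ p ∈ S, ¬ p ∣ n then 1/(n:ℝ)^2 else 0 with hF
    have hq0 : 0 < q := hq.pos
    have hinj : Function.Injective (fun k : ℕ => q * k) := fun a b h => by
      exact Nat.eq_of_mul_eq_mul_left hq0 h
    have hcomp : (fun n => if q ∣ n then F n else 0) ∘ (fun k : ℕ => q * k)
        = fun k => (1/(q:ℝ)^2) * F k := by
      funext k
      simp only [Function.comp]
      rw [if_pos (dvd_mul_right q k)]
      rcases Nat.eq_zero_or_pos k with rfl | hk
      · simp [hF]
      · have hcond : (∀ p ∈ S, ¬ p ∣ q * k) ↔ (∀ p ∈ S, ¬ p ∣ k) := by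
          constructor
          · intro h p hp hpk
            exact h p hp (hpk.mul_left q)
          · intro h p hp hpk
            have hp' : p.Prime := hS' p hp
            rcases hp'.dvd_mul.mp hpk with hpq | hpk'
            · have : p = q := (Nat.prime_dvd_prime_iff_eq hp' hq).mp hpq
              subst this
              exact hqS hp
            · exact h p hp hpk'
        by_cases hc : ∀ p ∈ S, ¬ p ∣ k
        · rw [hF]
          simp only
          rw [if_pos (hcond.mpr hc), if_pos hc]
          have : ((q*k:ℕ):ℝ) = (q:ℝ)*(k:ℝ) := by push_cast; ring
          rw [this, mul_pow]
          have hq0' : ((q:ℝ))^2 ≠ 0 := by positivity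
          have hk0' : ((k:ℝ))^2 ≠ 0 := by
            have : (0:ℝ) < k := by exact_mod_cast hk
            positivity
          field_simp
        · rw [hF]
          simp only
          rw [if_neg (fun h => hc (hcond.mp h)), if_neg hc, mul_zero]
    have hside : ∀ n ∉ Set.range (fun k : ℕ => q * k), (if q ∣ n then F n else 0) = 0 := by
      intro n hn
      rw [if_neg]
      intro hdvd
      obtain ⟨c, hc⟩ := hdvd
      exact hn ⟨c, hc.symm⟩
    have hmul : HasSum (fun n => if q ∣ n then F n else 0) ((1/(q:ℝ)^2) * Z) := by
      rw [← Function.Injective.hasSum_iff hinj hside, hcomp]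
      exact IH.mul_left _
    have hsplit : (fun n : ℕ => if ∀ p ∈ insert q S, ¬ p ∣ n then 1/(n:ℝ)^2 else 0)
        = fun n => F n - (if q ∣ n then F n else 0) := by
      funext n
      by_cases hqn : q ∣ n
      · rw [if_pos hqn]
        have hno : ¬ (∀ p ∈ insert q S, ¬ p ∣ n) := fun h => h q (Finset.mem_insert_self q S) hqn
        rw [if_neg hno]; ring
      · rw [if_neg hqn]
        have hiff : (∀ p ∈ insert q S, ¬ p ∣ n) ↔ (∀ p ∈ S, ¬ p ∣ n) := by
          constructor
          · intro h p hp; exact h p (Finset.mem_insert_of_mem hp)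
          · intro h p hp
            rcases Finset.mem_insert.mp hp with rfl | hp'
            · exact hqn
            · exact h p hp'
        rw [hF]
        simp only
        by_cases hc : ∀ p ∈ S, ¬ p ∣ n
        · rw [if_pos (hiff.mpr hc), if_pos hc]; ring
        · rw [if_neg (fun h => hc (hiff.mp h)), if_neg hc]; ring
    rw [hsplit]
    have hfinal := IH.sub hmul
    have : Z - (1/(q:ℝ)^2) * Z = (π^2/6) * ∏ p ∈ insert q S, (1 - 1/(p:ℝ)^2) := by
      rw [Finset.prod_insert hqS, hZ]; ring
    rwa [this] at hfinal

lemma coprime_iff_forall (m : ℕ) (hm : 0 < m) (n : ℕ) :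
    Nat.gcd n m = 1 ↔ ∀ p ∈ m.primeFactors, ¬ p ∣ n := by
  constructor
  · intro h p hp hpn
    have hpm : p ∣ m := Nat.dvd_of_mem_primeFactors hp
    have hp' : p.Prime := Nat.prime_of_mem_primeFactors hp
    have : p ∣ Nat.gcd n m := Nat.dvd_gcd hpn hpm
    rw [h] at this
    exact hp'.one_lt.ne' (Nat.dvd_one.mp this)
  · intro h
    by_contra hg
    obtain ⟨p, hp, hpd⟩ := Nat.exists_prime_and_dvd hg
    have hpn : p ∣ n := hpd.trans (Nat.gcd_dvd_left n m)
    have hpm : p ∣ m := hpd.trans (Nat.gcd_dvd_right n m)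
    exact h p (Nat.mem_primeFactors.mpr ⟨hp, hpm, hm.ne'⟩) hpn

lemma hasSum_hnu (m : ℕ) (hm : 0 < m) :
    HasSum (hnu m) ((π^2/6) * ∏ p ∈ m.primeFactors, (1 - 1/(p:ℝ)^2)) := by
  have h := hasSum_sieve m.primeFactors (fun p hp => Nat.prime_of_mem_primeFactors hp)
  have heq : (fun n : ℕ => if ∀ p ∈ m.primeFactors, ¬ p ∣ n then 1/(n:ℝ)^2 else 0) = hnu m := by
    funext n
    rw [hnu]
    by_cases hc : Nat.gcd n m = 1
    · rw [if_pos ((coprime_iff_forall m hm n).mp hc), if_pos hc]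
    · rw [if_neg (fun h' => hc ((coprime_iff_forall m hm n).mpr h')), if_neg hc]
  rwa [heq] at h

noncomputable def gmu (m : ℕ) (d : ℕ) : ℝ :=
  if Nat.gcd d m = 1 then (ArithmeticFunction.moebius d : ℝ)/(d:ℝ)^2 else 0

lemma gmu_zero (m : ℕ) : gmu m 0 = 0 := by
  rw [gmu]
  by_cases hc : Nat.gcd 0 m = 1 <;> simp [hc]

lemma hnu_zero (m : ℕ) : hnu m 0 = 0 := by
  rw [hnu]
  by_cases hc : Nat.gcd 0 m = 1 <;> simp [hc]

lemma abs_gmu_le (m d : ℕ) : |gmu m d| ≤ 1/(d:ℝ)^2 := by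
  rcases Nat.eq_zero_or_pos d with rfl | hd
  · rw [gmu_zero]; simp
  · have hd0 : (0:ℝ) < (d:ℝ) := by exact_mod_cast hd
    rw [gmu]
    by_cases hc : Nat.gcd d m = 1
    · rw [if_pos hc, abs_div, abs_of_pos (by positivity : (0:ℝ) < (d:ℝ)^2)]
      gcongr
      exact abs_moebius_le_one d
    · rw [if_neg hc, abs_zero]; positivity

lemma abs_hnu_le (m e : ℕ) : |hnu m e| ≤ 1/(e:ℝ)^2 := by
  rw [hnu]
  by_cases hc : Nat.gcd e m = 1
  · rw [if_pos hc, abs_of_nonneg (by positivity)]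
  · rw [if_neg hc, abs_zero]; positivity

lemma summable_sq : Summable (fun n : ℕ => 1/(n:ℝ)^2) :=
  Real.summable_one_div_nat_pow.mpr one_lt_two

lemma summable_abs_gmu (m : ℕ) : Summable (fun d => |gmu m d|) :=
  Summable.of_nonneg_of_le (fun _ => abs_nonneg _) (abs_gmu_le m) summable_sq

lemma summable_gmu (m : ℕ) : Summable (gmu m) := (summable_abs_gmu m).of_abs

lemma summable_abs_hnu (m : ℕ) : Summable (fun e => |hnu m e|) :=
  Summable.of_nonneg_of_le (fun _ => abs_nonneg _) (abs_hnu_le m) summable_sq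

lemma summable_hnu (m : ℕ) : Summable (hnu m) := (summable_abs_hnu m).of_abs

lemma sum_moebius_divisors (n : ℕ) :
    ∑ p ∈ n.divisorsAntidiagonal, (ArithmeticFunction.moebius p.1 : ℤ)
      = if n = 1 then 1 else 0 := by
  have h1 : (ArithmeticFunction.moebius * ↑ArithmeticFunction.zeta : ArithmeticFunction ℤ) n
      = (1 : ArithmeticFunction ℤ) n := by
    rw [ArithmeticFunction.moebius_mul_coe_zeta]
  rw [ArithmeticFunction.mul_apply, ArithmeticFunction.one_apply] at h1
  rw [← h1]
  apply Finset.sum_congr rfl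
  intro p hp
  have hp2 : p.2 ≠ 0 := (Nat.ne_zero_of_mem_divisorsAntidiagonal hp).2
  simp [ArithmeticFunction.natCoe_apply, ArithmeticFunction.zeta_apply, hp2]

lemma sum_moebius_divisors_real (n : ℕ) :
    ∑ p ∈ n.divisorsAntidiagonal, (ArithmeticFunction.moebius p.1 : ℝ)
      = if n = 1 then 1 else 0 := by
  have h := congrArg (fun z : ℤ => (z : ℝ)) (sum_moebius_divisors n)
  push_cast at h
  convert h using 2

lemma conv_eval (m : ℕ) (n : ℕ) (hn : n ≠ 0) :
    ∑ p ∈ n.divisorsAntidiagonal, gmu m p.1 * hnu m p.2 = if n = 1 then 1 else 0 := by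
  by_cases hg : Nat.gcd n m = 1
  · have hterm : ∀ p ∈ n.divisorsAntidiagonal,
        gmu m p.1 * hnu m p.2 = (ArithmeticFunction.moebius p.1 : ℝ) * (1/(n:ℝ)^2) := by
      intro p hp
      obtain ⟨hmul, hn0⟩ := Nat.mem_divisorsAntidiagonal.mp hp
      have hd1 : p.1 ∣ n := Dvd.intro p.2 hmul
      have hd2 : p.2 ∣ n := Dvd.intro_left p.1 hmul
      have hc1 : Nat.gcd p.1 m = 1 := Nat.Coprime.coprime_dvd_left hd1 hg
      have hc2 : Nat.gcd p.2 m = 1 := Nat.Coprime.coprime_dvd_left hd2 hg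
      have hp1 : p.1 ≠ 0 := fun h => hn (by rw [← hmul, h, zero_mul])
      have hp2 : p.2 ≠ 0 := fun h => hn (by rw [← hmul, h, mul_zero])
      have hr1 : (p.1:ℝ) ≠ 0 := Nat.cast_ne_zero.mpr hp1
      have hr2 : (p.2:ℝ) ≠ 0 := Nat.cast_ne_zero.mpr hp2
      rw [gmu, hnu, if_pos hc1, if_pos hc2]
      have hcast : (n:ℝ) = (p.1:ℝ)*(p.2:ℝ) := by rw [← hmul]; push_cast; ring
      rw [hcast, div_mul_div_comm, mul_one, mul_pow, mul_one_div]
    rw [Finset.sum_congr rfl hterm, ← Finset.sum_mul, sum_moebius_divisors_real n]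
    by_cases h1 : n = 1
    · subst h1; norm_num
    · simp [h1]
  · have hn1 : n ≠ 1 := fun h => by rw [h] at hg; exact hg (Nat.gcd_one_left m)
    rw [if_neg hn1]
    apply Finset.sum_eq_zero
    intro p hp
    obtain ⟨hmul, hn0⟩ := Nat.mem_divisorsAntidiagonal.mp hp
    obtain ⟨q, hq, hqd⟩ := Nat.exists_prime_and_dvd hg
    have hqn : q ∣ p.1 * p.2 := by rw [hmul]; exact hqd.trans (Nat.gcd_dvd_left n m)
    have hqm : q ∣ m := hqd.trans (Nat.gcd_dvd_right n m)
    rcases hq.dvd_mul.mp hqn with h1 | h2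
    · have hne : Nat.gcd p.1 m ≠ 1 := fun hco => by
        have hdd : q ∣ 1 := hco ▸ Nat.dvd_gcd h1 hqm
        exact hq.one_lt.ne' (Nat.dvd_one.mp hdd)
      rw [gmu, if_neg hne, zero_mul]
    · have hne : Nat.gcd p.2 m ≠ 1 := fun hco => by
        have hdd : q ∣ 1 := hco ▸ Nat.dvd_gcd h2 hqm
        exact hq.one_lt.ne' (Nat.dvd_one.mp hdd)
      rw [hnu, if_neg hne, mul_zero]

lemma G_mul_Z (m : ℕ) (hm : 0 < m) : (∑' d, gmu m d) * (∑' e, hnu m e) = 1 := by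
  have hg := (summable_gmu m).hasSum
  have hh := (summable_hnu m).hasSum
  have hnorm : Summable fun p : ℕ×ℕ => gmu m p.1 * hnu m p.2 :=
    summable_mul_of_summable_norm
      (by simpa [Real.norm_eq_abs] using summable_abs_gmu m)
      (by simpa [Real.norm_eq_abs] using summable_abs_hnu m)
  have hprod := hg.mul hh hnorm
  have hfib := hprod.tsum_fiberwise (fun p => p.1 * p.2)
  have heval : (fun n => ∑' c : (fun p : ℕ×ℕ => p.1 * p.2) ⁻¹' {n},
      gmu m (c : ℕ×ℕ).1 * hnu m (c : ℕ×ℕ).2) = fun n => if n = 1 then (1:ℝ) else 0 := by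
    funext n
    rcases eq_or_ne n 0 with rfl | hn
    · have hzero : ∀ c : (fun p : ℕ×ℕ => p.1 * p.2) ⁻¹' {(0:ℕ)},
          gmu m (c : ℕ×ℕ).1 * hnu m (c : ℕ×ℕ).2 = 0 := by
        rintro ⟨⟨a,b⟩, hab⟩
        simp only [Set.mem_preimage, Set.mem_singleton_iff] at hab
        rcases Nat.mul_eq_zero.mp hab with rfl | rfl
        · simp [gmu_zero]
        · simp [hnu_zero]
      rw [tsum_congr hzero, tsum_zero]
      norm_num
    · have hset : (fun p : ℕ×ℕ => p.1 * p.2) ⁻¹' {n} = ↑n.divisorsAntidiagonal := by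
        ext p
        simp [Nat.mem_divisorsAntidiagonal, hn]
      rw [hset, Finset.tsum_subtype' n.divisorsAntidiagonal (fun p => gmu m p.1 * hnu m p.2)]
      exact conv_eval m n hn
  rw [heval] at hfib
  exact HasSum.unique hfib (hasSum_ite_eq 1 1)

lemma tsum_gmu (m : ℕ) (hm : 0 < m) :
    ∑' d, gmu m d = (∏ p ∈ m.primeFactors, (1 - 1/(p:ℝ)^2)⁻¹)/(π^2/6) := by
  have hZ := (hasSum_hnu m hm).tsum_eq
  have hQpos : 0 < ∏ p ∈ m.primeFactors, (1 - 1/(p:ℝ)^2) := by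
    apply Finset.prod_pos
    intro p hp
    have hp2 : (2:ℝ) ≤ p := by exact_mod_cast (Nat.prime_of_mem_primeFactors hp).two_le
    have h4 : (4:ℝ) ≤ (p:ℝ)^2 := by nlinarith
    have h14 : 1/(p:ℝ)^2 ≤ 1/4 := by
      apply one_div_le_one_div_of_le (by norm_num) h4
    linarith
  have hπ : (0:ℝ) < π^2/6 := by positivity
  have hZpos : 0 < ∑' e, hnu m e := by rw [hZ]; exact mul_pos hπ hQpos
  have hGZ := G_mul_Z m hm
  have hG : ∑' d, gmu m d = 1/(∑' e, hnu m e) := by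
    rw [eq_div_iff (ne_of_gt hZpos)]; exact hGZ
  rw [hG, hZ, Finset.prod_inv_distrib]
  rw [one_div, mul_inv, div_eq_mul_inv]
  ring

lemma gmu_tail (m N : ℕ) (hN : 1 ≤ N) :
    |∑ d ∈ Finset.Icc 1 N, gmu m d - ∑' d, gmu m d| ≤ 1/(N:ℝ) := by
  have hsum := summable_gmu m
  have hkey := Summable.sum_add_tsum_nat_add (N+1) hsum
  have hIcc : ∑ d ∈ Finset.Icc 1 N, gmu m d = ∑ d ∈ Finset.range (N+1), gmu m d := by
    apply Finset.sum_subset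
    · intro k hk; simp only [Finset.mem_Icc] at hk; simp only [Finset.mem_range]; omega
    · intro k hk hk2
      simp only [Finset.mem_range] at hk
      simp only [Finset.mem_Icc] at hk2
      have : k = 0 := by omega
      subst this; exact gmu_zero m
  rw [hIcc]
  have habs : ∑ d ∈ Finset.range (N+1), gmu m d - ∑' d, gmu m d
      = -(∑' i, gmu m (i+(N+1))) := by
    rw [← hkey]; ring
  rw [habs, abs_neg]
  set f : ℕ → ℝ := fun i => 1/((i+N:ℕ):ℝ) with hf
  set t : ℕ → ℝ := fun i => f i - f (i+1) with ht
  have hcast : ∀ i : ℕ, ((i+N:ℕ):ℝ) ≥ 1 := by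
    intro i
    have : (1:ℕ) ≤ i + N := by omega
    exact_mod_cast this
  have hcast2 : ∀ i : ℕ, ((i+1+N:ℕ):ℝ) = ((i+N:ℕ):ℝ) + 1 := by
    intro i; push_cast; ring
  have ht_eq : ∀ i, t i = 1/(((i+N:ℕ):ℝ) * (((i+N:ℕ):ℝ)+1)) := by
    intro i
    have ha := hcast i
    have ha0 : ((i+N:ℕ):ℝ) > 0 := by linarith
    rw [ht]; simp only [hf]
    rw [hcast2 i]
    field_simp
    ring
  have htnn : ∀ i, 0 ≤ t i := by
    intro i
    rw [ht_eq i]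
    have := hcast i
    positivity
  have hbound : ∀ i, |gmu m (i+(N+1))| ≤ t i := by
    intro i
    refine (abs_gmu_le m _).trans ?_
    rw [ht_eq i]
    have ha := hcast i
    have ha0 : (0:ℝ) < ((i+N:ℕ):ℝ) := by linarith
    have hc3 : ((i+(N+1):ℕ):ℝ) = ((i+N:ℕ):ℝ) + 1 := by push_cast; ring
    rw [hc3]
    apply one_div_le_one_div_of_le (by positivity)
    nlinarith
  have hsummable_comp : Summable (fun i => 1/(((i+N):ℕ):ℝ)^2) := by
    have := (summable_nat_add_iff (f := fun n : ℕ => 1/(n:ℝ)^2) N).mpr summable_sq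
    exact this
  have hsummable_t : Summable t := by
    apply Summable.of_nonneg_of_le htnn _ hsummable_comp
    intro i
    rw [ht_eq i]
    have ha := hcast i
    have ha0 : (0:ℝ) < ((i+N:ℕ):ℝ) := by linarith
    apply one_div_le_one_div_of_le (by positivity)
    nlinarith
  have hsummable_abs : Summable (fun i => |gmu m (i+(N+1))|) := by
    have := (summable_nat_add_iff (f := fun d : ℕ => |gmu m d|) (N+1)).mpr (summable_abs_gmu m)
    exact this
  have h1 : |∑' i, gmu m (i+(N+1))| ≤ ∑' i, |gmu m (i+(N+1))| := by
    calc |∑' i, gmu m (i+(N+1))| = ‖∑' i, gmu m (i+(N+1))‖ := (Real.norm_eq_abs _).symm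
      _ ≤ ∑' i, ‖gmu m (i+(N+1))‖ :=
          norm_tsum_le_tsum_norm (by simpa [Real.norm_eq_abs] using hsummable_abs)
      _ = ∑' i, |gmu m (i+(N+1))| := by simp [Real.norm_eq_abs]
  have h2 : ∑' i, |gmu m (i+(N+1))| ≤ ∑' i, t i := Summable.tsum_le_tsum hbound hsummable_abs hsummable_t
  have h3 : ∑' i, t i ≤ 1/(N:ℝ) := by
    apply Summable.tsum_le_of_sum_le hsummable_t
    intro s
    obtain ⟨M, hM⟩ := Finset.exists_nat_subset_range s
    calc ∑ i ∈ s, t i ≤ ∑ i ∈ Finset.range M, t i :=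
          Finset.sum_le_sum_of_subset_of_nonneg hM (fun i _ _ => htnn i)
      _ = f 0 - f M := Finset.sum_range_sub' f M
      _ ≤ 1/(N:ℝ) := by
          have h0 : f 0 = 1/(N:ℝ) := by simp only [hf]; norm_num
          have hM0 : 0 ≤ f M := by simp only [hf]; positivity
          linarith
  linarith [h1, h2, h3]

end PerronAux

open PerronAux

theorem perron_asymptotic (m : ℕ) (hm : 0 < m) :
    ∃ C : ℝ, ∀ x : ℝ, 1 ≤ x →
      |(∑ Δ ∈ Finset.Icc 1 ⌊x⌋₊, (Δ : ℝ) * (K m Δ : ℝ) * Real.log (x / Δ)) -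
          ((∏ p ∈ m.primeFactors, (1 - 1 / (p : ℝ) ^ 2)⁻¹) / (π ^ 2 / 6)) * x ^ 2 / 4|
        ≤ C * x := by
  refine ⟨17, fun x hx => ?_⟩
  have hx0 : (0:ℝ) < x := by linarith
  set N := ⌊x⌋₊ with hN
  have hN1 : 1 ≤ N := Nat.le_floor (by exact_mod_cast hx)
  have hNx : (N:ℝ) ≤ x := Nat.floor_le (by linarith)
  have hxN : x < N + 1 := Nat.lt_floor_add_one x
  have hNr : (1:ℝ) ≤ N := by exact_mod_cast hN1
  rw [reindex m x N]
  have hinner : ∀ d ∈ (Finset.Icc 1 N).filter (fun d => Nat.gcd d m = 1),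
      (ArithmeticFunction.moebius d : ℝ) *
          ∑ e ∈ Finset.Icc 1 (N / d), ((e:ℝ) * Real.log (x / (d * e)))
      = (ArithmeticFunction.moebius d : ℝ) * T (x / d) := by
    intro d hd
    congr 1
    rw [T, Nat.floor_div_natCast, ← hN]
    apply Finset.sum_congr rfl
    intro e he
    rw [div_div]
  rw [Finset.sum_congr rfl hinner]
  have h1 : (∑ d ∈ Finset.Icc 1 N, gmu m d) * (x^2/4)
      = ∑ d ∈ (Finset.Icc 1 N).filter (fun d => Nat.gcd d m = 1),
          (ArithmeticFunction.moebius d : ℝ) * ((x/d)^2/4) := by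
    rw [Finset.sum_filter, Finset.sum_mul]
    apply Finset.sum_congr rfl
    intro d hd
    simp only [Finset.mem_Icc] at hd
    have hd0 : (0:ℝ) < d := by exact_mod_cast hd.1
    by_cases hP : Nat.gcd d m = 1
    · rw [if_pos hP, gmu, if_pos hP]
      field_simp
    · rw [if_neg hP, gmu, if_neg hP, zero_mul]
  have hsplit : ∑ d ∈ (Finset.Icc 1 N).filter (fun d => Nat.gcd d m = 1),
        (ArithmeticFunction.moebius d : ℝ) * T (x/d)
      = (∑ d ∈ (Finset.Icc 1 N).filter (fun d => Nat.gcd d m = 1),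
          (ArithmeticFunction.moebius d : ℝ) * (T (x/d) - (x/d)^2/4))
        + (∑ d ∈ Finset.Icc 1 N, gmu m d) * (x^2/4) := by
    rw [h1, ← Finset.sum_add_distrib]
    apply Finset.sum_congr rfl
    intro d _
    ring
  rw [hsplit]
  have hG := tsum_gmu m hm
  have hA : |∑ d ∈ (Finset.Icc 1 N).filter (fun d => Nat.gcd d m = 1),
      (ArithmeticFunction.moebius d : ℝ) * (T (x/d) - (x/d)^2/4)| ≤ 16 * x := by
    calc |∑ d ∈ (Finset.Icc 1 N).filter (fun d => Nat.gcd d m = 1),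
        (ArithmeticFunction.moebius d : ℝ) * (T (x/d) - (x/d)^2/4)|
        ≤ ∑ d ∈ (Finset.Icc 1 N).filter (fun d => Nat.gcd d m = 1),
            |(ArithmeticFunction.moebius d : ℝ) * (T (x/d) - (x/d)^2/4)| :=
          Finset.abs_sum_le_sum_abs _ _
      _ ≤ ∑ d ∈ (Finset.Icc 1 N).filter (fun d => Nat.gcd d m = 1), 8 * Real.sqrt (x/d) := by
          apply Finset.sum_le_sum
          intro d hd
          simp only [Finset.mem_filter, Finset.mem_Icc] at hd
          have hd1r : (1:ℝ) ≤ d := by exact_mod_cast hd.1.1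
          have hdN : (d:ℝ) ≤ N := by exact_mod_cast hd.1.2
          have hxd : 1 ≤ x/d := by
            rw [le_div_iff₀ (by linarith)]
            linarith
          rw [abs_mul]
          calc |(ArithmeticFunction.moebius d : ℝ)| * |T (x/d) - (x/d)^2/4|
              ≤ 1 * (8 * Real.sqrt (x/d)) :=
                mul_le_mul (abs_moebius_le_one d) (T_estimate hxd) (abs_nonneg _) zero_le_one
            _ = 8 * Real.sqrt (x/d) := one_mul _
      _ ≤ ∑ d ∈ Finset.Icc 1 N, 8 * Real.sqrt (x/d) :=
          Finset.sum_le_sum_of_subset_of_nonneg (Finset.filter_subset _ _)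
            (fun i _ _ => by positivity)
      _ = 8 * Real.sqrt x * ∑ d ∈ Finset.Icc 1 N, 1/Real.sqrt d := by
          rw [Finset.mul_sum]
          apply Finset.sum_congr rfl
          intro d hd
          rw [Real.sqrt_div hx0.le]
          ring
      _ ≤ 8 * Real.sqrt x * (2 * Real.sqrt N) :=
          mul_le_mul_of_nonneg_left (sqrt_harmonic N) (by positivity)
      _ ≤ 16 * x := by
          have hs1 : Real.sqrt N ≤ Real.sqrt x := Real.sqrt_le_sqrt hNx
          have hs2 : Real.sqrt x * Real.sqrt x = x := Real.mul_self_sqrt hx0.le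
          nlinarith [Real.sqrt_nonneg x, Real.sqrt_nonneg (N:ℝ)]
  have hB : |(∑ d ∈ Finset.Icc 1 N, gmu m d) * (x^2/4)
      - (∏ p ∈ m.primeFactors, (1 - 1 / (p : ℝ) ^ 2)⁻¹) / (π ^ 2 / 6) * x ^ 2 / 4| ≤ x/2 := by
    have htail := gmu_tail m N hN1
    rw [hG] at htail
    have h2x : 1/(N:ℝ) ≤ 2/x := by
      rw [div_le_div_iff₀ (by linarith) hx0]
      linarith
    have heq : (∑ d ∈ Finset.Icc 1 N, gmu m d) * (x^2/4)
        - (∏ p ∈ m.primeFactors, (1 - 1 / (p : ℝ) ^ 2)⁻¹) / (π ^ 2 / 6) * x ^ 2 / 4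
        = ((∑ d ∈ Finset.Icc 1 N, gmu m d)
            - (∏ p ∈ m.primeFactors, (1 - 1/(p:ℝ)^2)⁻¹) / (π^2/6)) * (x^2/4) := by
      ring
    rw [heq, abs_mul, abs_of_nonneg (by positivity : (0:ℝ) ≤ x^2/4)]
    calc |(∑ d ∈ Finset.Icc 1 N, gmu m d)
          - (∏ p ∈ m.primeFactors, (1 - 1/(p:ℝ)^2)⁻¹) / (π^2/6)| * (x^2/4)
        ≤ (2/x) * (x^2/4) :=
          mul_le_mul_of_nonneg_right (htail.trans h2x) (by positivity)
      _ = x/2 := by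
          field_simp
          ring
  have habs : |(∑ d ∈ (Finset.Icc 1 N).filter (fun d => Nat.gcd d m = 1),
        (ArithmeticFunction.moebius d : ℝ) * (T (x/d) - (x/d)^2/4))
      + (∑ d ∈ Finset.Icc 1 N, gmu m d) * (x^2/4)
      - (∏ p ∈ m.primeFactors, (1 - 1 / (p : ℝ) ^ 2)⁻¹) / (π ^ 2 / 6) * x ^ 2 / 4|
      ≤ |∑ d ∈ (Finset.Icc 1 N).filter (fun d => Nat.gcd d m = 1),
          (ArithmeticFunction.moebius d : ℝ) * (T (x/d) - (x/d)^2/4)|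
        + |(∑ d ∈ Finset.Icc 1 N, gmu m d) * (x^2/4)
          - (∏ p ∈ m.primeFactors, (1 - 1 / (p : ℝ) ^ 2)⁻¹) / (π ^ 2 / 6) * x ^ 2 / 4| := by
    rw [add_sub_assoc]
    exact abs_add_le _ _
  linarith [hA, hB, habs]
end

section
/- For every positive integer v and every δ > 0, ∑_{ℓ=1}^{v-1} gcd(ℓ,v)^{1/2} / ‖ℓ/v‖ = O_δ(v^{1+δ}), where ‖x‖ denotes the distance from x to the nearest integer. -/
open Finset Real

lemma pow_lower (t : ℝ) (ht : 2 ≤ t) (a : ℕ) : (a + 1 : ℝ) ≤ t ^ a := by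
  calc (a + 1 : ℝ) ≤ (2:ℝ) ^ a := by
        have h : (a + 1 : ℕ) ≤ 2 ^ a := Nat.lt_two_pow_self (n := a)
        exact_mod_cast h
       _ ≤ t ^ a := by gcongr

-- small prime case: a+1 ≤ C₀ * t^a when t ≥ 2^ε (t = p^ε, p ≥ 2)
lemma pow_lower_small (ε : ℝ) (hε : 0 < ε) (a : ℕ) :
    (a + 1 : ℝ) ≤ max 1 (1 / (ε * Real.log 2)) * (2:ℝ) ^ ((a : ℝ) * ε) := by
  set C : ℝ := max 1 (1 / (ε * Real.log 2)) with hC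
  have hlog : 0 < Real.log 2 := Real.log_pos (by norm_num)
  have h2 : (2:ℝ) ^ ((a:ℝ) * ε) = Real.exp ((a:ℝ) * ε * Real.log 2) := by
    rw [Real.rpow_def_of_pos (by norm_num), mul_comm (Real.log 2)]
  have hexp : 1 + (a:ℝ) * ε * Real.log 2 ≤ (2:ℝ) ^ ((a:ℝ) * ε) := by
    rw [h2]; linarith [Real.add_one_le_exp ((a:ℝ) * ε * Real.log 2)]
  have hC1 : (1:ℝ) ≤ C := le_max_left _ _
  have hC2 : 1 / (ε * Real.log 2) ≤ C := le_max_right _ _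
  have hεlog : 0 < ε * Real.log 2 := by positivity
  have key : (a + 1 : ℝ) ≤ C * (1 + (a:ℝ) * ε * Real.log 2) := by
    have hx : (0:ℝ) ≤ (a:ℝ) * ε * Real.log 2 := by positivity
    have ha : (a:ℝ) ≤ C * ((a:ℝ) * ε * Real.log 2) := by
      have h1 : (1 / (ε * Real.log 2)) * ((a:ℝ) * ε * Real.log 2) ≤ C * ((a:ℝ) * ε * Real.log 2) :=
        mul_le_mul_of_nonneg_right hC2 hx
      have h2 : (1 / (ε * Real.log 2)) * ((a:ℝ) * ε * Real.log 2) = (a:ℝ) := by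
        field_simp
      linarith
    nlinarith
  calc (a + 1 : ℝ) ≤ C * (1 + (a:ℝ) * ε * Real.log 2) := key
    _ ≤ C * (2:ℝ) ^ ((a:ℝ) * ε) := by
        have h0 : (0:ℝ) < C := by linarith
        nlinarith

lemma tau_rpow_bound (ε : ℝ) (hε : 0 < ε) :
    ∃ C : ℝ, 1 ≤ C ∧ ∀ n : ℕ, 1 ≤ n → (n.divisors.card : ℝ) ≤ C * (n:ℝ) ^ ε := by
  classical
  set C₀ : ℝ := max 1 (1 / (ε * Real.log 2)) with hC₀def
  have hC₀1 : (1:ℝ) ≤ C₀ := le_max_left _ _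
  set N₀ : ℕ := ⌈(2:ℝ) ^ (1/ε)⌉₊ with hN₀def
  refine ⟨C₀ ^ (N₀ + 1), one_le_pow₀ hC₀1, ?_⟩
  intro n hn
  have hn0 : n ≠ 0 := by omega
  -- notation
  set S := n.primeFactors with hS
  set a : ℕ → ℕ := fun p => n.factorization p with ha
  have hcard : (n.divisors.card : ℝ) = ∏ p ∈ S, ((a p : ℝ) + 1) := by
    rw [Nat.card_divisors hn0]
    push_cast
    rfl
  have hprime : ∀ p ∈ S, 2 ≤ p := fun p hp => (Nat.prime_of_mem_primeFactors hp).two_le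
  have hnprod : (n:ℝ) = ∏ p ∈ S, (p:ℝ) ^ (a p) := by
    conv_lhs => rw [← Nat.factorization_prod_pow_eq_self hn0]
    rw [Nat.prod_factorization_eq_prod_primeFactors]
    push_cast
    rfl
  have hnrpow : (n:ℝ) ^ ε = ∏ p ∈ S, (p:ℝ) ^ ((a p : ℝ) * ε) := by
    rw [hnprod, ← Real.finset_prod_rpow S _ (fun p _ => by positivity) ε]
    refine Finset.prod_congr rfl fun p hp => ?_
    have hp0 : (0:ℝ) ≤ (p:ℝ) := by positivity
    rw [← Real.rpow_natCast (p:ℝ) (a p), ← Real.rpow_mul hp0]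
  set c : ℕ → ℝ := fun p => if (p:ℝ) ^ ε < 2 then C₀ else 1 with hc
  have hkey : ∀ p ∈ S, (a p : ℝ) + 1 ≤ c p * (p:ℝ) ^ ((a p : ℝ) * ε) := by
    intro p hp
    have hp2 : (2:ℝ) ≤ (p:ℝ) := by exact_mod_cast hprime p hp
    have hp0 : (0:ℝ) ≤ (p:ℝ) := by linarith
    by_cases hsmall : (p:ℝ) ^ ε < 2
    · simp only [hc, if_pos hsmall]
      have h2 : (2:ℝ) ^ ((a p : ℝ) * ε) ≤ (p:ℝ) ^ ((a p : ℝ) * ε) :=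
        Real.rpow_le_rpow (by norm_num) hp2 (by positivity)
      have := pow_lower_small ε hε (a p)
      have hC₀0 : (0:ℝ) ≤ C₀ := by linarith
      calc (a p : ℝ) + 1 ≤ C₀ * (2:ℝ) ^ ((a p : ℝ) * ε) := by
            simpa [hC₀def] using pow_lower_small ε hε (a p)
        _ ≤ C₀ * (p:ℝ) ^ ((a p : ℝ) * ε) := by nlinarith
    · simp only [hc, if_neg hsmall]
      push_neg at hsmall
      rw [one_mul]
      have : (p:ℝ) ^ ((a p : ℝ) * ε) = ((p:ℝ) ^ ε) ^ (a p) := by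
        rw [mul_comm, Real.rpow_mul hp0, Real.rpow_natCast]
      rw [this]
      exact pow_lower _ hsmall (a p)
  have hprodle : (n.divisors.card : ℝ) ≤ (∏ p ∈ S, c p) * (n:ℝ) ^ ε := by
    rw [hcard, hnrpow, ← Finset.prod_mul_distrib]
    refine Finset.prod_le_prod (fun p _ => by positivity) hkey
  have hcle : (∏ p ∈ S, c p) ≤ C₀ ^ (N₀ + 1) := by
    rw [← Finset.prod_filter_mul_prod_filter_not S (fun p : ℕ => (p:ℝ) ^ ε < 2)]
    have h1 : ∏ p ∈ S.filter (fun p : ℕ => (p:ℝ) ^ ε < 2), c p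
        = C₀ ^ (S.filter (fun p : ℕ => (p:ℝ) ^ ε < 2)).card := by
      rw [Finset.prod_congr rfl (fun p hp => ?_), Finset.prod_const]
      simp only [hc]
      rw [if_pos (Finset.mem_filter.mp hp).2]
    have h2 : ∏ p ∈ S.filter (fun p : ℕ => ¬ (p:ℝ) ^ ε < 2), c p = 1 := by
      refine Finset.prod_eq_one fun p hp => ?_
      simp only [hc]
      rw [if_neg (Finset.mem_filter.mp hp).2]
    rw [h1, h2, mul_one]
    have hsub : (S.filter (fun p : ℕ => (p:ℝ) ^ ε < 2)) ⊆ Finset.range (N₀ + 1) := by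
      intro p hp
      obtain ⟨hpS, hps⟩ := Finset.mem_filter.mp hp
      have hp0 : (0:ℝ) ≤ (p:ℝ) := by positivity
      have hlt : (p:ℝ) < (2:ℝ) ^ (1/ε) := by
        have := Real.rpow_lt_rpow (by positivity) hps (by positivity : (0:ℝ) < 1/ε)
        rwa [← Real.rpow_mul hp0, mul_one_div_cancel hε.ne', Real.rpow_one] at this
      have : (p:ℝ) ≤ (N₀ : ℝ) := le_trans hlt.le (Nat.le_ceil _)
      have : p ≤ N₀ := by exact_mod_cast this
      exact Finset.mem_range.mpr (by omega)
    have hcard' : (S.filter (fun p : ℕ => (p:ℝ) ^ ε < 2)).card ≤ N₀ + 1 := by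
      simpa using Finset.card_le_card hsub
    exact pow_le_pow_right₀ hC₀1 hcard'
  have hnε : (0:ℝ) ≤ (n:ℝ) ^ ε := by positivity
  calc (n.divisors.card : ℝ) ≤ (∏ p ∈ S, c p) * (n:ℝ) ^ ε := hprodle
    _ ≤ C₀ ^ (N₀ + 1) * (n:ℝ) ^ ε := by nlinarith

lemma round_dist_lb (x : ℝ) (h0 : 0 < x) (h1 : x < 1) :
    min x (1 - x) ≤ |x - round x| := by
  set n := round x with hn
  rcases le_or_gt (n : ℝ) 0 with h | h
  · calc min x (1-x) ≤ x := min_le_left _ _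
      _ ≤ x - n := by linarith
      _ ≤ |x - n| := le_abs_self _
  · have hn1 : (1:ℝ) ≤ (n:ℝ) := by exact_mod_cast h
    calc min x (1-x) ≤ 1 - x := min_le_right _ _
      _ ≤ (n:ℝ) - x := by linarith
      _ ≤ |x - n| := by rw [abs_sub_comm]; exact le_abs_self _

lemma one_div_min (s t : ℝ) (hs : 0 < s) (ht : 0 < t) :
    1 / min s t ≤ 1 / s + 1 / t := by
  rcases min_cases s t with ⟨h, _⟩ | ⟨h, _⟩ <;> rw [h]
  · have : 0 < 1/t := by positivity
    linarith
  · have : 0 < 1/s := by positivity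
    linarith

-- per-term bound
lemma term_le (v ℓ : ℕ) (h1 : 1 ≤ ℓ) (h2 : ℓ < v) (a : ℝ) (ha : 0 ≤ a) :
    a / |(ℓ : ℝ) / v - round ((ℓ : ℝ) / v)|
      ≤ a * ((v:ℝ)/ℓ) + a * ((v:ℝ)/(v - ℓ : ℕ)) := by
  have hv : (0:ℝ) < v := by exact_mod_cast Nat.pos_of_ne_zero (by omega)
  have hℓ : (0:ℝ) < ℓ := by exact_mod_cast h1
  have hvℓ : (0:ℝ) < ((v - ℓ : ℕ):ℝ) := by
    have : 0 < v - ℓ := by omega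
    exact_mod_cast this
  set x : ℝ := (ℓ:ℝ)/v with hx
  have hx0 : 0 < x := by positivity
  have hx1 : x < 1 := by rw [hx, div_lt_one hv]; exact_mod_cast h2
  have hmin : 0 < min x (1 - x) := lt_min hx0 (by linarith)
  have hd : min x (1-x) ≤ |x - round x| := round_dist_lb x hx0 hx1
  have h1x : 1 - x = ((v - ℓ : ℕ):ℝ)/v := by
    rw [hx]
    have : ((v - ℓ : ℕ):ℝ) = (v:ℝ) - ℓ := by
      have := Nat.cast_sub h2.le (R := ℝ)
      exact this
    rw [this]
    field_simp
  calc a / |x - round x| ≤ a / min x (1-x) := by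
        apply div_le_div_of_nonneg_left ha hmin hd
      _ = a * (1 / min x (1-x)) := by ring
      _ ≤ a * (1/x + 1/(1-x)) := by
        have := one_div_min x (1-x) hx0 (by linarith)
        nlinarith
      _ = a * ((v:ℝ)/ℓ) + a * ((v:ℝ)/(v - ℓ : ℕ)) := by
        rw [h1x, hx]
        rw [one_div_div, one_div_div]
        ring

lemma gcd_sub' (v ℓ : ℕ) (h : ℓ ≤ v) : Nat.gcd (v - ℓ) v = Nat.gcd ℓ v := by
  calc Nat.gcd (v-ℓ) v = Nat.gcd (v-ℓ) ℓ := by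
        rw [← Nat.gcd_sub_self_right (Nat.sub_le v ℓ), Nat.sub_sub_self h]
    _ = Nat.gcd ℓ v := by rw [Nat.gcd_sub_self_left h, Nat.gcd_comm]

lemma reflect_sum (v : ℕ) :
    ∑ ℓ ∈ Ico 1 v, (Nat.gcd ℓ v : ℝ) ^ ((1:ℝ)/2) * ((v:ℝ)/((v - ℓ : ℕ):ℝ))
      = ∑ ℓ ∈ Ico 1 v, (Nat.gcd ℓ v : ℝ) ^ ((1:ℝ)/2) * ((v:ℝ)/(ℓ:ℝ)) := by
  refine Finset.sum_nbij' (fun ℓ => v - ℓ) (fun ℓ => v - ℓ) ?_ ?_ ?_ ?_ ?_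
  · intro ℓ hℓ; simp only [Finset.mem_Ico] at *; omega
  · intro ℓ hℓ; simp only [Finset.mem_Ico] at *; omega
  · intro ℓ hℓ; simp only [Finset.mem_Ico] at hℓ; omega
  · intro ℓ hℓ; simp only [Finset.mem_Ico] at hℓ; omega
  · intro ℓ hℓ
    simp only [Finset.mem_Ico] at hℓ
    rw [gcd_sub' v ℓ (by omega)]

lemma gcd_le_divsum (v ℓ : ℕ) (hv : 1 ≤ v) (hℓ : 1 ≤ ℓ) :
    (Nat.gcd ℓ v : ℝ) ^ ((1:ℝ)/2)
      ≤ ∑ d ∈ v.divisors.filter (· ∣ ℓ), (d:ℝ) ^ ((1:ℝ)/2) := by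
  have hmem : Nat.gcd ℓ v ∈ v.divisors.filter (· ∣ ℓ) := by
    rw [Finset.mem_filter, Nat.mem_divisors]
    exact ⟨⟨Nat.gcd_dvd_right _ _, by omega⟩, Nat.gcd_dvd_left _ _⟩
  exact Finset.single_le_sum (f := fun d : ℕ => (d:ℝ) ^ ((1:ℝ)/2)) (fun d _ => by positivity) hmem

lemma inner_harmonic (v d : ℕ) (hd : 1 ≤ d) :
    ∑ ℓ ∈ (Finset.Ico 1 v).filter (d ∣ ·), (1:ℝ)/(ℓ:ℝ)
      ≤ (1/(d:ℝ)) * ∑ j ∈ Finset.Icc 1 v, (1:ℝ)/(j:ℝ) := by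
  have hstep : ∑ ℓ ∈ (Finset.Ico 1 v).filter (d ∣ ·), (1:ℝ)/(ℓ:ℝ)
      = ∑ j ∈ ((Finset.Ico 1 v).filter (d ∣ ·)).image (· / d), (1/(d:ℝ)) * (1/(j:ℝ)) := by
    rw [Finset.sum_image ?_]
    · refine Finset.sum_congr rfl fun ℓ hℓ => ?_
      obtain ⟨hℓ', hdvd⟩ := Finset.mem_filter.mp hℓ
      have he : d * (ℓ / d) = ℓ := Nat.mul_div_cancel' hdvd
      have : (ℓ:ℝ) = (d:ℝ) * ((ℓ/d : ℕ):ℝ) := by exact_mod_cast he.symm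
      rw [this]
      have hd0 : (0:ℝ) < d := by exact_mod_cast hd
      have hℓd : 0 < ℓ / d := by
        have := Finset.mem_Ico.mp hℓ'
        exact Nat.div_pos (Nat.le_of_dvd (by omega) hdvd) (by omega)
      have hℓd0 : (0:ℝ) < ((ℓ/d : ℕ):ℝ) := by exact_mod_cast hℓd
      field_simp
    · intro x hx y hy hxy
      obtain ⟨_, hdx⟩ := Finset.mem_filter.mp hx
      obtain ⟨_, hdy⟩ := Finset.mem_filter.mp hy
      rw [← Nat.mul_div_cancel' hdx, ← Nat.mul_div_cancel' hdy, show x / d = y / d from hxy]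
  rw [hstep, Finset.mul_sum]
  refine Finset.sum_le_sum_of_subset_of_nonneg ?_ (fun j _ _ => by positivity)
  intro j hj
  obtain ⟨ℓ, hℓ, rfl⟩ := Finset.mem_image.mp hj
  obtain ⟨hℓ', hdvd⟩ := Finset.mem_filter.mp hℓ
  have h1 := Finset.mem_Ico.mp hℓ'
  rw [Finset.mem_Icc]
  constructor
  · exact Nat.div_pos (Nat.le_of_dvd (by omega) hdvd) (by omega)
  · exact le_trans (Nat.div_le_self _ _) (by omega)

lemma T_bound (v : ℕ) (hv : 1 ≤ v) :
    ∑ ℓ ∈ Finset.Ico 1 v, (Nat.gcd ℓ v : ℝ) ^ ((1:ℝ)/2) * ((v:ℝ)/(ℓ:ℝ))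
      ≤ (v.divisors.card : ℝ) * ((v:ℝ) * ∑ j ∈ Finset.Icc 1 v, (1:ℝ)/(j:ℝ)) := by
  set H : ℝ := ∑ j ∈ Finset.Icc 1 v, (1:ℝ)/(j:ℝ) with hH
  have hH0 : 0 ≤ H := Finset.sum_nonneg fun j _ => by positivity
  have hv0 : (0:ℝ) ≤ v := by positivity
  calc ∑ ℓ ∈ Finset.Ico 1 v, (Nat.gcd ℓ v : ℝ) ^ ((1:ℝ)/2) * ((v:ℝ)/(ℓ:ℝ))
      ≤ ∑ ℓ ∈ Finset.Ico 1 v,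
          (∑ d ∈ v.divisors.filter (· ∣ ℓ), (d:ℝ) ^ ((1:ℝ)/2)) * ((v:ℝ)/(ℓ:ℝ)) := by
        refine Finset.sum_le_sum fun ℓ hℓ => ?_
        have h1 := (Finset.mem_Ico.mp hℓ).1
        have : (0:ℝ) ≤ (v:ℝ)/(ℓ:ℝ) := by positivity
        exact mul_le_mul_of_nonneg_right (gcd_le_divsum v ℓ hv h1) this
    _ = ∑ ℓ ∈ Finset.Ico 1 v, ∑ d ∈ v.divisors,
          (if d ∣ ℓ then (d:ℝ) ^ ((1:ℝ)/2) * ((v:ℝ)/(ℓ:ℝ)) else 0) := by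
        refine Finset.sum_congr rfl fun ℓ _ => ?_
        rw [Finset.sum_mul, Finset.sum_filter]
    _ = ∑ d ∈ v.divisors, ∑ ℓ ∈ (Finset.Ico 1 v).filter (d ∣ ·),
          (d:ℝ) ^ ((1:ℝ)/2) * ((v:ℝ)/(ℓ:ℝ)) := by
        rw [Finset.sum_comm]
        refine Finset.sum_congr rfl fun d _ => ?_
        rw [Finset.sum_filter]
    _ ≤ ∑ d ∈ v.divisors, (1:ℝ) * ((v:ℝ) * H) := by
        refine Finset.sum_le_sum fun d hd => ?_
        have hd1 : 1 ≤ d := (Nat.pos_of_mem_divisors hd)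
        have hd0 : (0:ℝ) < d := by exact_mod_cast hd1
        have hsq : (0:ℝ) ≤ (d:ℝ) ^ ((1:ℝ)/2) := by positivity
        calc ∑ ℓ ∈ (Finset.Ico 1 v).filter (d ∣ ·), (d:ℝ) ^ ((1:ℝ)/2) * ((v:ℝ)/(ℓ:ℝ))
            = ((d:ℝ) ^ ((1:ℝ)/2) * (v:ℝ)) * ∑ ℓ ∈ (Finset.Ico 1 v).filter (d ∣ ·), (1:ℝ)/(ℓ:ℝ) := by
              rw [Finset.mul_sum]
              refine Finset.sum_congr rfl fun ℓ _ => by ring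
          _ ≤ ((d:ℝ) ^ ((1:ℝ)/2) * (v:ℝ)) * ((1/(d:ℝ)) * H) := by
              refine mul_le_mul_of_nonneg_left (inner_harmonic v d hd1) (by positivity)
          _ = ((d:ℝ) ^ ((1:ℝ)/2) * (1/(d:ℝ))) * ((v:ℝ) * H) := by ring
          _ ≤ (1:ℝ) * ((v:ℝ) * H) := by
              have hdd : (d:ℝ) ^ ((1:ℝ)/2) ≤ (d:ℝ) := by
                have := Real.rpow_le_rpow_of_exponent_le (by exact_mod_cast hd1 : (1:ℝ) ≤ (d:ℝ))
                  (by norm_num : (1:ℝ)/2 ≤ 1)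
                simpa using this
              have h1 : (d:ℝ) ^ ((1:ℝ)/2) * (1/(d:ℝ)) ≤ 1 := by
                rw [mul_one_div]
                rw [div_le_one hd0]
                exact hdd
              have : (0:ℝ) ≤ (v:ℝ) * H := by positivity
              nlinarith
    _ = (v.divisors.card : ℝ) * ((v:ℝ) * H) := by
        rw [Finset.sum_const, nsmul_eq_mul]; ring

lemma H_le_log (v : ℕ) (hv : 1 ≤ v) :
    ∑ j ∈ Finset.Icc 1 v, (1:ℝ)/(j:ℝ) ≤ 1 + Real.log v := by
  have h : ∑ j ∈ Finset.Icc 1 v, (1:ℝ)/(j:ℝ) = ((harmonic v : ℚ) : ℝ) := by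
    rw [harmonic_eq_sum_Icc]
    push_cast
    refine Finset.sum_congr rfl fun j _ => ?_
    rw [one_div]
  rw [h]
  exact harmonic_le_one_add_log v

lemma one_add_log_le (ε : ℝ) (hε : 0 < ε) (x : ℝ) (hx : 1 ≤ x) :
    1 + Real.log x ≤ (1 + 1/ε) * x ^ ε := by
  have hx0 : (0:ℝ) < x := by linarith
  have h1 : (1:ℝ) ≤ x ^ ε := Real.one_le_rpow hx hε.le
  have h2 : Real.log (x ^ ε) = ε * Real.log x := Real.log_rpow hx0 ε
  have h3 : Real.log (x ^ ε) ≤ x ^ ε - 1 := Real.log_le_sub_one_of_pos (by positivity)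
  have h4 : Real.log x ≤ (1/ε) * x ^ ε := by
    have : ε * Real.log x ≤ x ^ ε := by rw [← h2]; linarith
    rw [div_mul_eq_mul_div, le_div_iff₀ hε]
    linarith [this]
  nlinarith [h4, h1, hε, one_div_pos.mpr hε]

theorem gcd_over_dist_sum_bound (δ : ℝ) (hδ : 0 < δ) :
    ∃ C : ℝ, ∀ v : ℕ, 1 ≤ v →
      ∑ ℓ ∈ Finset.Ico 1 v,
          (Nat.gcd ℓ v : ℝ) ^ ((1 : ℝ) / 2) / |(ℓ : ℝ) / v - round ((ℓ : ℝ) / v)|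
        ≤ C * (v : ℝ) ^ ((1 : ℝ) + δ) := by
  obtain ⟨C₂, hC₂1, hC₂⟩ := tau_rpow_bound (δ/2) (by linarith)
  set K : ℝ := 1 + 1/(δ/2) with hK
  have hK0 : 0 < K := by rw [hK]; positivity
  refine ⟨2 * C₂ * K, fun v hv => ?_⟩
  have hv0 : (0:ℝ) < v := by exact_mod_cast hv
  have hv1 : (1:ℝ) ≤ v := by exact_mod_cast hv
  set H : ℝ := ∑ j ∈ Finset.Icc 1 v, (1:ℝ)/(j:ℝ) with hHdef
  have hH0 : 0 ≤ H := Finset.sum_nonneg fun j _ => by positivity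
  have hHle : H ≤ K * (v:ℝ) ^ (δ/2) := by
    calc H ≤ 1 + Real.log v := H_le_log v hv
      _ ≤ K * (v:ℝ) ^ (δ/2) := by
          have := one_add_log_le (δ/2) (by linarith) (v:ℝ) hv1
          simpa [hK] using this
  have hτ0 : (0:ℝ) ≤ (v.divisors.card : ℝ) := by positivity
  have hτ : (v.divisors.card : ℝ) ≤ C₂ * (v:ℝ) ^ (δ/2) := hC₂ v hv
  calc ∑ ℓ ∈ Finset.Ico 1 v,
          (Nat.gcd ℓ v : ℝ) ^ ((1 : ℝ) / 2) / |(ℓ : ℝ) / v - round ((ℓ : ℝ) / v)|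
      ≤ ∑ ℓ ∈ Finset.Ico 1 v,
          ((Nat.gcd ℓ v : ℝ) ^ ((1:ℝ)/2) * ((v:ℝ)/(ℓ:ℝ))
            + (Nat.gcd ℓ v : ℝ) ^ ((1:ℝ)/2) * ((v:ℝ)/((v - ℓ : ℕ):ℝ))) := by
        refine Finset.sum_le_sum fun ℓ hℓ => ?_
        obtain ⟨h1, h2⟩ := Finset.mem_Ico.mp hℓ
        exact term_le v ℓ h1 h2 _ (by positivity)
    _ = ∑ ℓ ∈ Finset.Ico 1 v, (Nat.gcd ℓ v : ℝ) ^ ((1:ℝ)/2) * ((v:ℝ)/(ℓ:ℝ))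
        + ∑ ℓ ∈ Finset.Ico 1 v, (Nat.gcd ℓ v : ℝ) ^ ((1:ℝ)/2) * ((v:ℝ)/((v - ℓ : ℕ):ℝ)) :=
        Finset.sum_add_distrib
    _ = 2 * ∑ ℓ ∈ Finset.Ico 1 v, (Nat.gcd ℓ v : ℝ) ^ ((1:ℝ)/2) * ((v:ℝ)/(ℓ:ℝ)) := by
        rw [reflect_sum]; ring
    _ ≤ 2 * ((v.divisors.card : ℝ) * ((v:ℝ) * H)) := by
        have := T_bound v hv
        rw [← hHdef] at this
        linarith
    _ ≤ 2 * ((C₂ * (v:ℝ) ^ (δ/2)) * ((v:ℝ) * (K * (v:ℝ) ^ (δ/2)))) := by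
        gcongr
    _ = 2 * C₂ * K * ((v:ℝ) ^ (δ/2) * (v:ℝ) ^ (1:ℝ) * (v:ℝ) ^ (δ/2)) := by
        rw [Real.rpow_one]; ring
    _ = 2 * C₂ * K * (v:ℝ) ^ ((1:ℝ) + δ) := by
        rw [← Real.rpow_add hv0, ← Real.rpow_add hv0]
        ring_nf
end
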